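/- Let C be a z_0-unsolvable configuration on the Flower snark J_3, let F = {z_1, z_{−1}}, and let X be any one of the sets A = {x_0, x_1, x_{−1}}, B = {y_0, y_1, y_{−1}}, E = {v_0, v_1, v_{−1}}. Then C(F) + 2·C(X) ≤ 10, where C(S) denotes the total number of pebbles on the vertices of S. -/

import Mathlib

/-- A pebbling move on the graph `G`: remove two pebbles from a vertex `u`
(which has at least two pebbles) and add one pebble to a neighbor `v` of `u`. -/
def PebblingMove {V : Type} [DecidableEq V] (G : SimpleGraph V) (C C' : V → ℕ) : Prop :=
  ∃ u v, G.Adj u v ∧ 2 ≤ C u ∧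
    C' = fun w => if w = u then C u - 2 else if w = v then C v + 1 else C w

/-- A configuration `C` is `r`-solvable if some (possibly empty) sequence of
pebbling moves starting from `C` produces a configuration with at least one
pebble on `r`. -/
def PebblingSolvable {V : Type} [DecidableEq V] (G : SimpleGraph V) (C : V → ℕ) (r : V) : Prop :=
  ∃ C' : V → ℕ, Relation.ReflTransGen (PebblingMove G) C C' ∧ 1 ≤ C' r

/-- The pebbling number of `G`: the least `t` such that for every target
vertex `r`, every configuration of size `t` is `r`-solvable. -/
noncomputable def pebblingNumber {V : Type} [DecidableEq V] [Fintype V] (G : SimpleGraph V) : ℕ :=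
  sInf {t : ℕ | ∀ (r : V) (C : V → ℕ), (∑ v, C v) = t → PebblingSolvable G C r}

/-- The 12 vertices of the Flower snark `J₃`; `vm` denotes `v_{-1}`,
`xm` denotes `x_{-1}`, etc. -/
inductive J3V : Type
  | v0 | v1 | vm | x0 | x1 | xm | y0 | y1 | ym | z0 | z1 | zm
  deriving DecidableEq

instance : Fintype J3V where
  elems := {J3V.v0, J3V.v1, J3V.vm, J3V.x0, J3V.x1, J3V.xm,
    J3V.y0, J3V.y1, J3V.ym, J3V.z0, J3V.z1, J3V.zm}
  complete := fun x => by cases x <;> decide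

open J3V in
/-- The Flower snark `J₃` (Tietze's graph), with its 18 edges. -/
def J3 : SimpleGraph J3V := SimpleGraph.fromEdgeSet
  ({s(z0, v0), s(z0, x0), s(z0, y0), s(v0, v1), s(v0, vm),
    s(x0, x1), s(x0, xm), s(y0, y1), s(y0, ym), s(v1, vm),
    s(v1, z1), s(vm, zm), s(x1, z1), s(y1, z1), s(xm, zm),
    s(ym, zm), s(xm, y1), s(x1, ym)} : Set (Sym2 J3V))

/-!
Pebbles on `z₁` and `z₋₁` can be pushed greedily through any of the three branches
`X = {x₀, x₁, x₋₁}`, `{y₀, y₁, y₋₁}`, `{v₀, v₁, v₋₁}`: half of them to `x₁`, `x₋₁`, then half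
of those to `x₀`, which is adjacent to `z₀`. As `C` is `z₀`-unsolvable, `x₀` collects at most one
pebble this way, and this floor-arithmetic bound unfolds to `C(F) + 2·C(X) ≤ 10`.
-/

section Pebbling

variable {V : Type} [DecidableEq V]

/-- The outcome of `k` pebbling moves from `u` to `v`; only meaningful when `2 * k ≤ C u`,
as the subtraction truncates. -/
def transfer (C : V → ℕ) (u v : V) (k : ℕ) : V → ℕ :=
  fun w => if w = u then C u - 2 * k else if w = v then C v + k else C w

variable {C : V → ℕ} {u v w : V} {k : ℕ}

@[simp]
lemma transfer_apply_source : transfer C u v k u = C u - 2 * k := if_pos rfl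

@[simp]
lemma transfer_apply_target (huv : u ≠ v) : transfer C u v k v = C v + k := by
  simp [transfer, huv.symm]

@[simp]
lemma transfer_apply_of_ne (hu : w ≠ u) (hv : w ≠ v) : transfer C u v k w = C w := by
  simp [transfer, hu, hv]

lemma transfer_succ (huv : u ≠ v) :
    transfer C u v (k + 1) = transfer (transfer C u v 1) u v k := by
  funext w
  by_cases hu : w = u
  · subst hu; simp only [transfer_apply_source]; omega
  by_cases hv : w = v
  · subst hv; simp only [transfer_apply_target huv]; omega
  simp only [transfer_apply_of_ne hu hv]

variable {G : SimpleGraph V}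

lemma reflTransGen_transfer (huv : G.Adj u v) (hk : 2 * k ≤ C u) :
    Relation.ReflTransGen (PebblingMove G) C (transfer C u v k) := by
  induction k generalizing C with
  | zero =>
    have : transfer C u v 0 = C := by
      funext w; unfold transfer; split_ifs <;> simp_all
    rw [this]
  | succ k ih =>
    have hk' : 2 * k ≤ transfer C u v 1 u := by rw [transfer_apply_source]; omega
    rw [transfer_succ huv.ne]
    exact .head ⟨u, v, huv, by omega, rfl⟩ (ih hk')

lemma PebblingSolvable.of_reflTransGen {C' : V → ℕ} {r : V}
    (hCC' : Relation.ReflTransGen (PebblingMove G) C C') (h : PebblingSolvable G C' r) :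
    PebblingSolvable G C r :=
  let ⟨D, hC'D, hD⟩ := h
  ⟨D, hCC'.trans hC'D, hD⟩

lemma PebblingSolvable.of_transfer {r : V} (huv : G.Adj u v)
    (h : PebblingSolvable G (transfer C u v (C u / 2)) r) : PebblingSolvable G C r :=
  .of_reflTransGen (reflTransGen_transfer huv (Nat.mul_div_le _ _)) h

lemma PebblingSolvable.of_adj {r : V} (hur : G.Adj u r) (hu : 2 ≤ C u) :
    PebblingSolvable G C r :=
  .of_transfer hur ⟨_, .refl, by rw [transfer_apply_target hur.ne]; omega⟩

/-- Greedy pebbling along the paths `q₁ p₁ p₀ r` and `q₂ p₂ p₀ r`. -/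
lemma PebblingSolvable.of_fork {r p₀ p₁ p₂ q₁ q₂ : V}
    (hq₁ : G.Adj q₁ p₁) (hq₂ : G.Adj q₂ p₂) (hp₁ : G.Adj p₁ p₀) (hp₂ : G.Adj p₂ p₀)
    (hp₀ : G.Adj p₀ r) (hnodup : [r, p₀, p₁, p₂, q₁, q₂].Nodup)
    (hC : 2 ≤ C p₀ + (C p₁ + C q₁ / 2) / 2 + (C p₂ + C q₂ / 2) / 2) :
    PebblingSolvable G C r := by
  simp only [List.nodup_cons, List.mem_cons, List.not_mem_nil, List.nodup_nil] at hnodup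
  refine .of_transfer hq₁ <| .of_transfer hq₂ <| .of_transfer hp₁ <| .of_transfer hp₂ <|
    .of_adj hp₀ ?_
  simp_all [eq_comm]

end Pebbling

open J3V

/-- For a `z₀`-unsolvable configuration `C` on `J₃`, with `F = {z₁, z₋₁}`
and `X` any one of `A = {x₀, x₁, x₋₁}`, `B = {y₀, y₁, y₋₁}`,
`E = {v₀, v₁, v₋₁}`, we have `C(F) + 2·C(X) ≤ 10`. -/
theorem J3_z0_unsolvable_XF (C : J3V → ℕ)
    (h : ¬ PebblingSolvable J3 C J3V.z0) :
    (∑ v ∈ ({J3V.z1, J3V.zm} : Finset J3V), C v) +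
      2 * (∑ v ∈ ({J3V.x0, J3V.x1, J3V.xm} : Finset J3V), C v) ≤ 10 ∧
    (∑ v ∈ ({J3V.z1, J3V.zm} : Finset J3V), C v) +
      2 * (∑ v ∈ ({J3V.y0, J3V.y1, J3V.ym} : Finset J3V), C v) ≤ 10 ∧
    (∑ v ∈ ({J3V.z1, J3V.zm} : Finset J3V), C v) +
      2 * (∑ v ∈ ({J3V.v0, J3V.v1, J3V.vm} : Finset J3V), C v) ≤ 10 := by
  have branch (p₀ p₁ p₂ : J3V)
      (hadj : J3.Adj z1 p₁ ∧ J3.Adj zm p₂ ∧ J3.Adj p₁ p₀ ∧ J3.Adj p₂ p₀ ∧ J3.Adj p₀ z0)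
      (hnodup : [z0, p₀, p₁, p₂, z1, zm].Nodup) :
      C p₀ + (C p₁ + C z1 / 2) / 2 + (C p₂ + C zm / 2) / 2 ≤ 1 := by
    obtain ⟨hp₁, hp₂, hp₁₀, hp₂₀, hp₀⟩ := hadj
    by_contra! hC
    exact h (.of_fork hp₁ hp₂ hp₁₀ hp₂₀ hp₀ hnodup hC)
  have hx := branch x0 x1 xm (by simp [J3]) (by decide)
  have hy := branch y0 y1 ym (by simp [J3]) (by decide)
  have hv := branch v0 v1 vm (by simp [J3]) (by decide)
  simp only [Finset.mem_insert, Finset.mem_singleton, reduceCtorEq, or_self, not_false_eq_true,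
    Finset.sum_insert, Finset.sum_singleton]
  omega
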